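/- arXiv:2106.09994 — 2 statements merged into one kernel-verified Lean document; each statement's English description precedes it below -/
import Mathlib

section
/- Let H be the RKHS of a bounded measurable kernel k on X, ρ a finite measure on X, A a positive semidefinite trace-class operator on H, and p_A(x) = ⟨φ(x), A φ(x)⟩. Then the mean embedding of the measure p_A dρ satisfies, for any v ∈ H: ⟨v, w_{p_A}⟩_H = ⟨A, V⟩_HS, where w_{p_A} = ∫ φ(x) p_A(x) dρ(x) and V = ∫ v(x) φ(x) ⊗ φ(x) dρ(x). -/
/-!
Pair `A (φ x)` and `φ x` against a Hilbert basis `b`: by Parseval, for each `x`,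
`p_A(x) ⟪v, φ x⟫ = ∑ᵢ ⟪v, φ x⟫ ⟪A (φ x), bᵢ⟫ ⟪bᵢ, φ x⟫`, and the `i`-th summand integrates to
`⟪A bᵢ, V bᵢ⟫`. The sum is absolutely convergent with a bound uniform in `x` (the kernel is
bounded), so sum and integral commute. Since the basis may be uncountable, the interchange is
done over the countably many `i` that see the essentially separable range of `p_A • φ`; the
other summands vanish almost everywhere. The same function `p_A • φ` also carries the
measurability, as `φ` itself is not assumed measurable.
-/

open MeasureTheory
open scoped RealInnerProductSpace

section HilbertBasis

variable {𝕜 E ι : Type*} [RCLike 𝕜] [NormedAddCommGroup E] [InnerProductSpace 𝕜 E]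

local notation "⟪" x ", " y "⟫" => inner 𝕜 x y

theorem HilbertBasis.tsum_enorm_inner_mul_inner_le (b : HilbertBasis ι 𝕜 E) (x y : E) :
    ∑' i, ‖⟪x, b i⟫ * ⟪b i, y⟫‖ₑ ≤ ‖x‖ₑ * ‖y‖ₑ := by
  obtain ⟨hsum, hle⟩ := lp.tsum_mul_le_mul_norm (p := 2) (q := 2) (by simpa using .two_two)
    (b.repr x) (b.repr y)
  simp only [b.repr_apply_apply, LinearIsometryEquiv.norm_map, norm_inner_symm (b _) x]
    at hsum hle
  simp_rw [← ofReal_norm, norm_mul]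
  rw [← ENNReal.ofReal_tsum_of_nonneg (fun _ => by positivity) hsum,
    ← ENNReal.ofReal_mul (norm_nonneg _)]
  exact ENNReal.ofReal_le_ofReal hle

theorem HilbertBasis.countable_setOf_exists_inner_ne_zero (b : HilbertBasis ι 𝕜 E) {t : Set E}
    (ht : TopologicalSpace.IsSeparable t) : {i | ∃ y ∈ t, ⟪b i, y⟫ ≠ 0}.Countable := by
  obtain ⟨D, hDc, htD⟩ := ht
  refine (hDc.biUnion fun d _ => (b.summable_inner_mul_inner d d).countable_support).mono ?_
  rintro i ⟨y, hyt, hy⟩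
  by_contra! hi
  have hD : D ⊆ {z | ⟪b i, z⟫ = 0} := fun d hd => by
    by_contra hne
    exact hi (Set.mem_biUnion hd (mul_ne_zero (by rwa [← inner_conj_symm, map_ne_zero]) hne))
  have hclosed : IsClosed {z | ⟪b i, z⟫ = 0} :=
    isClosed_eq (continuous_const.inner continuous_id) continuous_const
  exact hy (hclosed.closure_subset_iff.2 hD (htD hyt))

end HilbertBasis

theorem integral_tsum_of_ae_support_subset {X ι E : Type*} [MeasurableSpace X] {μ : Measure X}
    [NormedAddCommGroup E] [NormedSpace ℝ E] {G : ι → X → E} {I : Set ι} (hI : I.Countable)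
    (hG : ∀ i, AEStronglyMeasurable (G i) μ) (hsupp : ∀ᵐ x ∂μ, ∀ i ∉ I, G i x = 0)
    (hfin : ∫⁻ x, ∑' i, ‖G i x‖ₑ ∂μ ≠ ⊤) :
    ∫ x, ∑' i, G i x ∂μ = ∑' i, ∫ x, G i x ∂μ := by
  have : Countable I := hI.to_subtype
  have hzero : ∀ i ∉ I, ∫ x, G i x ∂μ = 0 := fun i hi =>
    integral_eq_zero_of_ae (hsupp.mono fun x hx => hx i hi)
  calc ∫ x, ∑' i, G i x ∂μ = ∫ x, ∑' i : I, G i x ∂μ := by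
        refine integral_congr_ae (hsupp.mono fun x hx => ?_)
        exact (tsum_subtype_eq_of_support_subset fun i hi => by_contra fun h => hi (hx i h)).symm
    _ = ∑' i : I, ∫ x, G i x ∂μ := by
        refine integral_tsum (fun i => hG i) (ne_top_of_le_ne_top hfin ?_)
        rw [← lintegral_tsum fun i : I => (hG i).enorm]
        refine lintegral_mono_ae (hsupp.mono fun x hx => ?_)
        exact (tsum_subtype_eq_of_support_subset (f := fun i => ‖G i x‖ₑ)
          fun i hi => by_contra fun h => hi (by simp [hx i h])).le
    _ = ∑' i, ∫ x, G i x ∂μ :=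
        tsum_subtype_eq_of_support_subset fun i hi => by_contra fun h => hi (hzero i h)

section Positive

variable {H : Type*} [NormedAddCommGroup H] [InnerProductSpace ℝ H] {A : H →L[ℝ] H}

theorem ContinuousLinearMap.IsPositive.apply_eq_zero_of_inner_eq_zero (hA : A.IsPositive)
    {y : H} (hy : ⟪y, A y⟫ = 0) : A y = 0 := by
  -- `t ↦ ⟪y + t • a, A (y + t • a)⟫` is a nonnegative quadratic without constant term
  have hperp (a : H) : ⟪a, A y⟫ = 0 := by
    have hdisc := discrim_le_zero (a := ⟪a, A a⟫) (b := 2 * ⟪a, A y⟫) (c := 0) fun t => by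
      have hsym : ⟪y, A a⟫ = ⟪a, A y⟫ := by rw [real_inner_comm, hA.inner_left_eq_inner_right]
      have := hA.inner_nonneg_right (y + t • a)
      simp only [map_add, map_smul, inner_add_left, inner_add_right, real_inner_smul_left,
        real_inner_smul_right, hy, hsym] at this
      linarith
    rw [discrim, mul_zero, sub_zero] at hdisc
    nlinarith [sq_nonneg ⟪a, A y⟫]
  exact inner_self_eq_zero.1 (hperp (A y))

theorem ContinuousLinearMap.IsPositive.inner_apply_mul_inner_eq_zero (hA : A.IsPositive)
    {y a : H} (h : ⟪a, ⟪y, A y⟫ • y⟫ = 0) : ⟪A y, a⟫ * ⟪a, y⟫ = 0 := by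
  rw [real_inner_smul_right, mul_eq_zero] at h
  rcases h with h | h
  · rw [hA.apply_eq_zero_of_inner_eq_zero h, inner_zero_left, zero_mul]
  · rw [h, mul_zero]

theorem ContinuousLinearMap.IsPositive.aestronglyMeasurable_inner_mul_inner_apply_mul_inner
    {X : Type*} [MeasurableSpace X] {μ : Measure X} (hA : A.IsPositive) {φ : X → H}
    (hF : AEStronglyMeasurable (fun x => ⟪φ x, A (φ x)⟫ • φ x) μ) (u a : H) :
    AEStronglyMeasurable (fun x => ⟪u, φ x⟫ * (⟪A (φ x), a⟫ * ⟪a, φ x⟫)) μ := by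
  set c : H → ℝ := fun y => ⟪u, y⟫ * (⟪A y, a⟫ * ⟪a, y⟫)
  -- `c` is cubic and `⟪p • y, A (p • y)⟫ = p ^ 3` for `p = ⟪y, A y⟫`
  have hc (y : H) : c y = ⟪⟪y, A y⟫ • y, A (⟪y, A y⟫ • y)⟫⁻¹ * c (⟪y, A y⟫ • y) := by
    by_cases hy : ⟪y, A y⟫ = 0
    · simp [c, hA.apply_eq_zero_of_inner_eq_zero hy]
    · simp only [c, map_smul, real_inner_smul_left, real_inner_smul_right]
      field_simp
  have hcont : Continuous c := by fun_prop
  have hquad : Continuous fun y : H => ⟪y, A y⟫ := by fun_prop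
  refine .congr ?_ (ae_of_all μ fun x => (hc (φ x)).symm)
  exact ((hquad.comp_aestronglyMeasurable hF).aemeasurable.inv.mul
    (hcont.comp_aestronglyMeasurable hF).aemeasurable).aestronglyMeasurable

end Positive

theorem HilbertBasis.tsum_enorm_inner_mul_inner_apply_mul_inner_le {H ι : Type*}
    [NormedAddCommGroup H] [InnerProductSpace ℝ H] (b : HilbertBasis ι ℝ H) (A : H →L[ℝ] H)
    (u y : H) : ∑' i, ‖⟪u, y⟫ * (⟪A y, b i⟫ * ⟪b i, y⟫)‖ₑ ≤ ‖u‖ₑ * ‖A‖ₑ * ‖y‖ₑ ^ 3 := by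
  have hinner : ‖⟪u, y⟫‖ₑ ≤ ‖u‖ₑ * ‖y‖ₑ := by
    simpa only [ofReal_norm, ENNReal.ofReal_mul (norm_nonneg _)] using
      ENNReal.ofReal_le_ofReal (norm_inner_le_norm (𝕜 := ℝ) u y)
  calc ∑' i, ‖⟪u, y⟫ * (⟪A y, b i⟫ * ⟪b i, y⟫)‖ₑ
      = ‖⟪u, y⟫‖ₑ * ∑' i, ‖⟪A y, b i⟫ * ⟪b i, y⟫‖ₑ := by
        simp only [enorm_mul, ENNReal.tsum_mul_left]
    _ ≤ (‖u‖ₑ * ‖y‖ₑ) * ((‖A‖ₑ * ‖y‖ₑ) * ‖y‖ₑ) := by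
        gcongr
        exact (b.tsum_enorm_inner_mul_inner_le _ _).trans (by gcongr; exact A.le_opENorm y)
    _ = ‖u‖ₑ * ‖A‖ₑ * ‖y‖ₑ ^ 3 := by ring

theorem stmt9_general {X : Type*} [MeasurableSpace X] {H : Type*} [NormedAddCommGroup H]
    [InnerProductSpace ℝ H] [CompleteSpace H] {ι : Type*} (b : HilbertBasis ι ℝ H)
    (φ : X → H) (k : X → X → ℝ) (hk : ∀ x y, ⟪φ x, φ y⟫ = k x y)
    (hbdd : ∃ C : ℝ, ∀ x, k x x ≤ C)
    (ρ : Measure X) [IsFiniteMeasure ρ]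
    (A : H →L[ℝ] H) (hA : A.IsPositive)
    (v : H) (V : H →L[ℝ] H)
    (hV : ∀ f g : H, ⟪f, V g⟫ = ∫ x, ⟪v, φ x⟫ * (⟪f, φ x⟫ * ⟪φ x, g⟫) ∂ρ)
    (w : H) (hw : w = ∫ x, ⟪φ x, A (φ x)⟫ • φ x ∂ρ)
    (hintw : Integrable (fun x => ⟪φ x, A (φ x)⟫ • φ x) ρ) :
    ⟪v, w⟫ = ∑' i, ⟪A (b i), V (b i)⟫ := by
  obtain ⟨C, hC⟩ := hbdd
  set G : ι → X → ℝ := fun i x => ⟪v, φ x⟫ * (⟪A (φ x), b i⟫ * ⟪b i, φ x⟫)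
  have hterm (i : ι) : ⟪A (b i), V (b i)⟫ = ∫ x, G i x ∂ρ := by
    refine (hV _ _).trans (integral_congr_ae (ae_of_all ρ fun x => ?_))
    dsimp only [G]
    rw [hA.inner_left_eq_inner_right, real_inner_comm (A (φ x)), real_inner_comm (b i) (φ x)]
  have hparseval (x : X) : ∑' i, G i x = ⟪v, ⟪φ x, A (φ x)⟫ • φ x⟫ := by
    rw [tsum_mul_left, b.tsum_inner_mul_inner, real_inner_smul_right, real_inner_comm (A (φ x))]
    ring
  obtain ⟨t, ht, hFt⟩ := hintw.aestronglyMeasurable.isSeparable_ae_range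
  have hsupp : ∀ᵐ x ∂ρ, ∀ i ∉ {i | ∃ y ∈ t, ⟪b i, y⟫ ≠ 0}, G i x = 0 := by
    filter_upwards [hFt] with x hx i hi
    dsimp only [G]
    rw [hA.inner_apply_mul_inner_eq_zero (not_not.1 fun h => hi ⟨_, hx, h⟩), mul_zero]
  have hφ (x : X) : ‖φ x‖ₑ ≤ ENNReal.ofReal √C := by
    rw [← ofReal_norm]
    exact ENNReal.ofReal_le_ofReal (Real.le_sqrt_of_sq_le (by
      rw [← real_inner_self_eq_norm_sq, hk]; exact hC x))
  have hfin : ∫⁻ x, ∑' i, ‖G i x‖ₑ ∂ρ ≠ ⊤ := by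
    refine ne_top_of_le_ne_top (b := ∫⁻ _, ‖v‖ₑ * ‖A‖ₑ * ENNReal.ofReal √C ^ 3 ∂ρ)
      (by rw [lintegral_const]; finiteness) (lintegral_mono fun x => ?_)
    exact (b.tsum_enorm_inner_mul_inner_apply_mul_inner_le A v (φ x)).trans (by gcongr; exact hφ x)
  calc ⟪v, w⟫ = ∫ x, ⟪v, ⟪φ x, A (φ x)⟫ • φ x⟫ ∂ρ := by rw [hw, integral_inner hintw]
    _ = ∫ x, ∑' i, G i x ∂ρ := by simp_rw [hparseval]
    _ = ∑' i, ∫ x, G i x ∂ρ := integral_tsum_of_ae_support_subset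
        (b.countable_setOf_exists_inner_ne_zero ht)
        (fun i => hA.aestronglyMeasurable_inner_mul_inner_apply_mul_inner
          hintw.aestronglyMeasurable v (b i)) hsupp hfin
    _ = ∑' i, ⟪A (b i), V (b i)⟫ := by simp_rw [hterm]

/-- `⟨v, w_{p_A}⟩ = ⟨A, V⟩_HS` where `w_{p_A} = ∫ p_A(x) φ(x) dρ(x)` and
`V = ∫ v(x) φ(x) ⊗ φ(x) dρ(x)` (characterized weakly), with `v(x) = ⟨v, φ(x)⟩`, and the
Hilbert–Schmidt inner product expressed through a Hilbert basis `b`. -/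
theorem stmt9 {X : Type*} [MeasurableSpace X] {H : Type*} [NormedAddCommGroup H]
    [InnerProductSpace ℝ H] [CompleteSpace H] {ι : Type*} (b : HilbertBasis ι ℝ H)
    (φ : X → H) (k : X → X → ℝ) (hk : ∀ x y, ⟪φ x, φ y⟫ = k x y)
    (hbdd : ∃ C : ℝ, ∀ x, k x x ≤ C)
    (ρ : Measure X) [IsFiniteMeasure ρ]
    (A : H →L[ℝ] H) (hA : A.IsPositive)
    (htc : Summable fun i => ⟪b i, A (b i)⟫)
    (v : H) (V : H →L[ℝ] H)
    (hV : ∀ f g : H, ⟪f, V g⟫ = ∫ x, ⟪v, φ x⟫ * (⟪f, φ x⟫ * ⟪φ x, g⟫) ∂ρ)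
    (w : H) (hw : w = ∫ x, ⟪φ x, A (φ x)⟫ • φ x ∂ρ)
    (hintw : Integrable (fun x => ⟪φ x, A (φ x)⟫ • φ x) ρ) :
    ⟪v, w⟫ = ∑' i, ⟪A (b i), V (b i)⟫ :=
  stmt9_general b φ k hk hbdd ρ A hA v V hV w hw hintw
end

section
/- Let X be a symmetric n×n real matrix with eigenvalue decomposition X = U diag(λ) Uᵀ, where U is orthogonal. Let λ⁺ be the Euclidean projection of λ ∈ ℝⁿ onto the probability simplex Δ_n = {x ∈ ℝ⁺ⁿ : Σ x_i = 1}. Then X⁺ = U diag(λ⁺) Uᵀ is the Frobenius-norm projection of X onto the set {M symmetric PSD : tr(M) = 1}, i.e., X⁺ minimizes ‖X - M‖_F over all positive semidefinite matrices M with unit trace. -/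
/-!
Conjugating by the orthogonal `U` preserves the Frobenius distance, so `‖X - M‖_F` equals the
distance from `diag λ` to `N = Uᵀ M U`, which is again PSD with unit trace. Discarding the
off-diagonal entries of `diag λ - N` only decreases that distance, and the diagonal of `N` lies in
the simplex, so the distance is at least `‖λ - λ⁺‖`, which is exactly `‖X - X⁺‖_F`.
-/

open Matrix

namespace Matrix

variable {m n : Type*} [Fintype m] [Fintype n]

lemma sum_sq_entries_eq_trace (A : Matrix m n ℝ) :
    ∑ i, ∑ j, A i j ^ 2 = (Aᵀ * A).trace := by
  rw [trace, Finset.sum_comm]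
  simp [mul_apply, sq]

lemma trace_mul_mul_transpose [DecidableEq n] {U : Matrix m n ℝ} (hU : Uᵀ * U = 1)
    (A : Matrix n n ℝ) :
    (U * A * Uᵀ).trace = A.trace := by
  rw [trace_mul_cycle, hU, Matrix.one_mul]

lemma sum_sq_entries_mul_mul_transpose [DecidableEq n] {U : Matrix m n ℝ} (hU : Uᵀ * U = 1)
    (A : Matrix n n ℝ) :
    ∑ i, ∑ j, (U * A * Uᵀ) i j ^ 2 = ∑ i, ∑ j, A i j ^ 2 := by
  have hconj : (U * A * Uᵀ)ᵀ * (U * A * Uᵀ) = U * (Aᵀ * A) * Uᵀ := by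
    simp only [transpose_mul, transpose_transpose, Matrix.mul_assoc]
    rw [← Matrix.mul_assoc Uᵀ U, hU, Matrix.one_mul]
  rw [sum_sq_entries_eq_trace, sum_sq_entries_eq_trace, hconj, trace_mul_mul_transpose hU]

lemma PosSemidef.mul_mul_transpose_same {A : Matrix n n ℝ} (hA : A.PosSemidef)
    (B : Matrix m n ℝ) : (B * A * Bᵀ).PosSemidef := by
  simpa using hA.mul_mul_conjTranspose_same B

lemma sum_sq_entries_diagonal [DecidableEq n] (d : n → ℝ) :
    ∑ i, ∑ j, diagonal d i j ^ 2 = ∑ i, d i ^ 2 := by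
  refine Finset.sum_congr rfl fun i _ => ?_
  rw [Finset.sum_eq_single i (fun j _ hji => by simp [Ne.symm hji]) (by simp)]
  simp

lemma sum_sq_diag_sub_le_sum_sq_entries [DecidableEq n] (d : n → ℝ) (N : Matrix n n ℝ) :
    ∑ i, (d i - N i i) ^ 2 ≤ ∑ i, ∑ j, (diagonal d - N) i j ^ 2 :=
  Finset.sum_le_sum fun i _ => by
    simpa using Finset.single_le_sum (f := fun j => (diagonal d - N) i j ^ 2)
      (fun j _ => sq_nonneg _) (Finset.mem_univ i)

lemma sum_sq_sub_mul_mul_transpose [DecidableEq n] {U : Matrix n n ℝ} (hUUt : U * Uᵀ = 1)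
    (hUtU : Uᵀ * U = 1) (A B : Matrix n n ℝ) :
    ∑ i, ∑ j, ((U * A * Uᵀ) i j - B i j) ^ 2 = ∑ i, ∑ j, (A - Uᵀ * B * U) i j ^ 2 := by
  have hB : B = U * (Uᵀ * B * U) * Uᵀ := by
    simp only [← Matrix.mul_assoc, hUUt, Matrix.one_mul]
    rw [Matrix.mul_assoc, hUUt, Matrix.mul_one]
  have hsub : U * A * Uᵀ - B = U * (A - Uᵀ * B * U) * Uᵀ := by
    conv_lhs => rw [hB]
    noncomm_ring
  rw [← sum_sq_entries_mul_mul_transpose hUtU, ← hsub]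
  rfl

end Matrix

theorem stmt13_general {n : ℕ} (X U : Matrix (Fin n) (Fin n) ℝ)
    (lam lamPlus : Fin n → ℝ)
    (hUorth : U * Uᵀ = 1 ∧ Uᵀ * U = 1)
    (hX : X = U * Matrix.diagonal lam * Uᵀ)
    (hmem : (∀ i, 0 ≤ lamPlus i) ∧ ∑ i, lamPlus i = 1)
    (hproj : ∀ y : Fin n → ℝ, (∀ i, 0 ≤ y i) → (∑ i, y i = 1) →
      ∑ i, (lam i - lamPlus i) ^ 2 ≤ ∑ i, (lam i - y i) ^ 2) :
    ((U * Matrix.diagonal lamPlus * Uᵀ).PosSemidef ∧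
        (U * Matrix.diagonal lamPlus * Uᵀ).trace = 1) ∧
    (∀ M : Matrix (Fin n) (Fin n) ℝ, M.IsSymm → M.PosSemidef → M.trace = 1 →
      ∑ i, ∑ j, (X i j - (U * Matrix.diagonal lamPlus * Uᵀ) i j) ^ 2
        ≤ ∑ i, ∑ j, (X i j - M i j) ^ 2) := by
  obtain ⟨hUUt, hUtU⟩ := hUorth
  refine ⟨⟨(posSemidef_diagonal_iff.mpr hmem.1).mul_mul_transpose_same U, ?_⟩,
    fun M _ hM hMtr => ?_⟩
  · rw [trace_mul_mul_transpose hUtU, trace_diagonal, hmem.2]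
  set N := Uᵀ * M * U
  have hN : N.PosSemidef := by simpa using hM.mul_mul_transpose_same Uᵀ
  have hNtr : ∑ i, N i i = 1 := by
    simpa [trace] using (trace_mul_mul_transpose (U := Uᵀ) (by simpa using hUUt) M).trans hMtr
  subst hX
  calc ∑ i, ∑ j, ((U * diagonal lam * Uᵀ) i j - (U * diagonal lamPlus * Uᵀ) i j) ^ 2
      = ∑ i, (lam i - lamPlus i) ^ 2 := by
        rw [sum_sq_sub_mul_mul_transpose hUUt hUtU, ← Matrix.mul_assoc, ← Matrix.mul_assoc,
          hUtU, Matrix.one_mul, Matrix.mul_assoc, hUtU, Matrix.mul_one, diagonal_sub,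
          sum_sq_entries_diagonal]
    _ ≤ ∑ i, (lam i - N i i) ^ 2 := hproj _ (fun _ => hN.diag_nonneg) hNtr
    _ ≤ ∑ i, ∑ j, (diagonal lam - N) i j ^ 2 := sum_sq_diag_sub_le_sum_sq_entries lam N
    _ = ∑ i, ∑ j, ((U * diagonal lam * Uᵀ) i j - M i j) ^ 2 :=
        (sum_sq_sub_mul_mul_transpose hUUt hUtU _ _).symm

/-- if `X = U diag(λ) Uᵀ` with `U` orthogonal and `λ⁺` is the Euclidean
projection of `λ` onto the probability simplex, then `X⁺ = U diag(λ⁺) Uᵀ` is the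
Frobenius-norm projection of `X` onto the PSD matrices with unit trace. -/
theorem stmt13 {n : ℕ} (X U : Matrix (Fin n) (Fin n) ℝ)
    (lam lamPlus : Fin n → ℝ)
    (hXsymm : X.IsSymm)
    (hUorth : U * Uᵀ = 1 ∧ Uᵀ * U = 1)
    (hX : X = U * Matrix.diagonal lam * Uᵀ)
    (hmem : (∀ i, 0 ≤ lamPlus i) ∧ ∑ i, lamPlus i = 1)
    (hproj : ∀ y : Fin n → ℝ, (∀ i, 0 ≤ y i) → (∑ i, y i = 1) →
      ∑ i, (lam i - lamPlus i) ^ 2 ≤ ∑ i, (lam i - y i) ^ 2) :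
    ((U * Matrix.diagonal lamPlus * Uᵀ).PosSemidef ∧
        (U * Matrix.diagonal lamPlus * Uᵀ).trace = 1) ∧
    (∀ M : Matrix (Fin n) (Fin n) ℝ, M.IsSymm → M.PosSemidef → M.trace = 1 →
      ∑ i, ∑ j, (X i j - (U * Matrix.diagonal lamPlus * Uᵀ) i j) ^ 2
        ≤ ∑ i, ∑ j, (X i j - M i j) ^ 2) :=
  stmt13_general X U lam lamPlus hUorth hX hmem hproj
end
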